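/- arXiv:1808.01528 — 2 statements merged into one kernel-verified Lean document; each statement's English description precedes it below -/
import Mathlib

section
/- For every nonnegative integer j, the limsup as k → ∞ of Γ_j(k)/k equals 3 (limit taken over positive integers k, with Γ_j(k)/k a real number). -/
/-- The Thue–Morse word, 1-indexed: `tm i` is the parity (0 or 1) of the number of 1's
in the binary expansion of `i - 1`. -/
def tm (i : ℕ) : ℕ := ((Nat.digits 2 (i - 1)).sum) % 2

/-- The `r`-th block (0-indexed) of size `m` of the `j`-fix of the Thue–Morse word:
the factor `⟨j + r*m + 1, j + (r+1)*m⟩`. -/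
def tmBlock (j m r : ℕ) : List ℕ := (List.range m).map fun i => tm (j + r * m + i + 1)

/-- The `j`-fix of the Thue–Morse word of length `k*m` is a `k`-anti-power, i.e. the
`k` blocks `⟨j + r*m + 1, j + (r+1)*m⟩` for `0 ≤ r ≤ k-1` are pairwise distinct. -/
def IsAntipowerJfix (j k m : ℕ) : Prop :=
  ∀ r₁ < k, ∀ r₂ < k, tmBlock j m r₁ = tmBlock j m r₂ → r₁ = r₂

/-- `gammaJ j k` is the least positive integer `m` such that the `j`-fix of the
Thue–Morse word of length `k*m` is a `k`-anti-power. -/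
noncomputable def gammaJ (j k : ℕ) : ℕ := sInf {m : ℕ | 0 < m ∧ IsAntipowerJfix j k m}

/-- `KJ j m` is the least positive integer `k` such that the `j`-fix of the
Thue–Morse word of length `k*m` is not a `k`-anti-power. -/
noncomputable def KJ (j m : ℕ) : ℕ := sInf {k : ℕ | 0 < k ∧ ¬ IsAntipowerJfix j k m}

/-- `GammaJ j k` is the supremum (in `ℕ`, with `sSup ∅ = 0` and `sSup` of an unbounded
set `= 0`) of the set of odd positive integers `m` such that the `j`-fix of the
Thue–Morse word of length `k*m` is not a `k`-anti-power. -/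
noncomputable def GammaJ (j k : ℕ) : ℕ := sSup {m : ℕ | Odd m ∧ ¬ IsAntipowerJfix j k m}

def sd (n : ℕ) : ℕ := (Nat.digits 2 n).sum
def T (n : ℕ) : ℕ := sd n % 2

lemma sd_zero : sd 0 = 0 := by simp [sd]

lemma sd_two_mul (n : ℕ) : sd (2 * n) = sd n := by
  rcases Nat.eq_zero_or_pos n with h | h
  · simp [h, sd]
  · unfold sd
    rw [Nat.digits_def' (by norm_num : (1:ℕ) < 2) (by omega)]
    simp [Nat.mul_div_cancel_left _ (by norm_num : 0 < 2), Nat.mul_mod_right]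

lemma sd_two_mul_add_one (n : ℕ) : sd (2 * n + 1) = sd n + 1 := by
  unfold sd
  rw [Nat.digits_def' (by norm_num : (1:ℕ) < 2) (by omega)]
  have h1 : (2 * n + 1) % 2 = 1 := by omega
  have h2 : (2 * n + 1) / 2 = n := by omega
  rw [h1, h2]
  simp [Nat.add_comm]

lemma sd_pow_mul_add (e : ℕ) : ∀ b o : ℕ, o < 2 ^ e → sd (2 ^ e * b + o) = sd b + sd o := by
  induction e with
  | zero => intro b o ho; interval_cases o; simp [sd_zero]
  | succ e ih =>
    intro b o ho
    have h2 : o % 2 < 2 := Nat.mod_lt _ (by norm_num)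
    have hq : o / 2 < 2 ^ e := by
      have : o < 2 ^ e * 2 := by rw [pow_succ] at ho; omega
      omega
    have hrepr : 2 ^ (e+1) * b + o = 2 * (2 ^ e * b + o / 2) + o % 2 := by
      have := Nat.div_add_mod o 2
      ring_nf
      omega
    rcases (by omega : o % 2 = 0 ∨ o % 2 = 1) with h | h
    · rw [hrepr, h, Nat.add_zero, sd_two_mul, ih b (o/2) hq]
      have : o = 2 * (o / 2) := by omega
      conv_rhs => rw [this, sd_two_mul]
    · rw [hrepr, h, sd_two_mul_add_one, ih b (o/2) hq]
      have : o = 2 * (o / 2) + 1 := by omega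
      conv_rhs => rw [this, sd_two_mul_add_one]
      ring

lemma T_two_mul (n : ℕ) : T (2*n) = sd n % 2 := by unfold T; rw [sd_two_mul]
lemma T_two_mul_add_one (n : ℕ) : T (2*n+1) = (sd n + 1) % 2 := by unfold T; rw [sd_two_mul_add_one]

/-- no three consecutive equal letters -/
lemma T_consec (n : ℕ) : ¬ (T n = T (n+1) ∧ T (n+1) = T (n+2)) := by
  have key : ∀ x : ℕ, T (2*x) ≠ T (2*x+1) := by
    intro x
    rw [T_two_mul, T_two_mul_add_one]; omega
  rintro ⟨h1, h2⟩
  rcases Nat.even_or_odd n with ⟨x, hx⟩ | ⟨x, hx⟩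
  · apply key x
    have e1 : 2*x = n := by omega
    rw [e1]
    exact h1
  · apply key (x+1)
    have e1 : 2*(x+1) = n+1 := by omega
    rw [e1]
    exact h2

/-- core: no equal length-4 windows, even start vs odd start -/
lemma no4 (γ δ : ℕ) (h : ∀ u < 4, T (2*γ + u) = T (2*δ + 1 + u)) : False := by
  have e0 := h 0 (by norm_num)
  have e1 := h 1 (by norm_num)
  have e2 := h 2 (by norm_num)
  have e3 := h 3 (by norm_num)
  have a0 : T (2*γ + 0) = sd γ % 2 := by rw [Nat.add_zero, T_two_mul]
  have a1 : T (2*γ + 1) = (sd γ + 1) % 2 := T_two_mul_add_one γ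
  have a2 : T (2*γ + 2) = sd (γ+1) % 2 := by
    have : 2*γ+2 = 2*(γ+1) := by ring
    rw [this, T_two_mul]
  have a3 : T (2*γ + 3) = (sd (γ+1) + 1) % 2 := by
    have : 2*γ+3 = 2*(γ+1)+1 := by ring
    rw [this, T_two_mul_add_one]
  have b0 : T (2*δ + 1 + 0) = (sd δ + 1) % 2 := by rw [Nat.add_zero]; exact T_two_mul_add_one δ
  have b1 : T (2*δ + 1 + 1) = sd (δ+1) % 2 := by
    have : 2*δ+1+1 = 2*(δ+1) := by ring
    rw [this, T_two_mul]
  have b2 : T (2*δ + 1 + 2) = (sd (δ+1) + 1) % 2 := by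
    have : 2*δ+1+2 = 2*(δ+1)+1 := by ring
    rw [this, T_two_mul_add_one]
  have b3 : T (2*δ + 1 + 3) = sd (δ+2) % 2 := by
    have : 2*δ+1+3 = 2*(δ+2) := by ring
    rw [this, T_two_mul]
  rw [a0, b0] at e0; rw [a1, b1] at e1; rw [a2, b2] at e2; rw [a3, b3] at e3
  clear h a0 a1 a2 a3 b0 b1 b2 b3
  have g1 : T δ = T (δ+1) := by unfold T; omega
  have g2 : T (δ+1) = T (δ+2) := by unfold T; omega
  exact T_consec δ ⟨g1, g2⟩

/-- no equal length-4 factors at odd distance -/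
lemma no_odd_4 (b c : ℕ) (hc : c % 2 = 1) (h : ∀ u < 4, T (b + u) = T (b + c + u)) : False := by
  rcases Nat.even_or_odd b with ⟨γ, hγ⟩ | ⟨γ, hγ⟩
  · -- b = 2γ even, b + c odd
    apply no4 γ (γ + c / 2)
    intro u hu
    have h1 : 2*γ + u = b + u := by omega
    have h2 : 2*(γ + c/2) + 1 + u = b + c + u := by omega
    rw [h1, h2]; exact h u hu
  · -- b odd, b + c even
    apply no4 ((b+c)/2) γ
    intro u hu
    have h1 : 2*((b+c)/2) + u = b + c + u := by omega
    have h2 : 2*γ + 1 + u = b + u := by omega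
    rw [h1, h2]
    exact (h u hu).symm

lemma T_pow_add (e b o : ℕ) (h : o < 2^e) : T (2^e * b + o) = (sd b + sd o) % 2 := by
  unfold T; rw [sd_pow_mul_add e b o h]

/-- sufficiency core: if the 3 letters at depth e agree, the length-m factors agree -/
lemma core_lower (e m a' ρ : ℕ) (hρ : ρ < 2^e) (hρm : ρ + m ≤ 3*2^e)
    (h3 : ∀ u < 3, T (a'+u) = T (a'+m+u)) :
    ∀ i < m, T (2^e*a' + ρ + i) = T (2^e*a' + ρ + 2^e*m + i) := by
  have hE : 0 < 2^e := by positivity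
  intro i hi
  set x := ρ + i with hxdef
  have hx3 : x < 3 * 2^e := by omega
  set u := x / 2^e with hudef
  set o := x % 2^e with hodef
  have hu : u < 3 := by
    rw [hudef]
    exact (Nat.div_lt_iff_lt_mul hE).mpr hx3
  have ho : o < 2^e := Nat.mod_lt _ hE
  have hxe : 2^e * u + o = x := Nat.div_add_mod x (2^e)
  have eq1 : 2^e*a' + ρ + i = 2^e*(a'+u) + o := by
    calc 2^e*a' + ρ + i = 2^e*a' + (ρ + i) := by ring
      _ = 2^e*a' + (2^e*u + o) := by rw [hxe]
      _ = 2^e*(a'+u) + o := by ring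
  have eq2 : 2^e*a' + ρ + 2^e*m + i = 2^e*(a'+m+u) + o := by
    calc 2^e*a' + ρ + 2^e*m + i = 2^e*a' + (ρ + i) + 2^e*m := by ring
      _ = 2^e*a' + (2^e*u + o) + 2^e*m := by rw [hxe]
      _ = 2^e*(a'+m+u) + o := by ring
  rw [eq1, eq2, T_pow_add e _ _ ho, T_pow_add e _ _ ho]
  have h' := h3 u hu
  unfold T at h'
  omega

/-- necessity core: equal length-m factors at distance 2^e * C with C odd force m ≤ 3·2^e -/
lemma core_upper (e a m C : ℕ) (hC : C % 2 = 1) (hm : 3*2^e < m)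
    (h : ∀ i < m, T (a+i) = T (a + 2^e*C + i)) : False := by
  have hE : 0 < 2^e := by positivity
  set b₀ := a / 2^e with hb₀
  set ρ := a % 2^e with hρ
  have hrepr : 2^e * b₀ + ρ = a := Nat.div_add_mod a (2^e)
  have hρlt : ρ < 2^e := Nat.mod_lt _ hE
  apply no_odd_4 b₀ C hC
  intro u hu
  have hcase : ∃ o, o < 2^e ∧ a ≤ 2^e*(b₀+u) + o ∧ 2^e*(b₀+u) + o < a + m := by
    rcases Nat.eq_zero_or_pos u with h0 | h0
    · refine ⟨ρ, hρlt, ?_, ?_⟩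
      · have h1 : 2^e*(b₀+u) + ρ = a := by rw [h0, ← hrepr]; ring
        omega
      · have h1 : 2^e*(b₀+u) + ρ = a := by rw [h0, ← hrepr]; ring
        omega
    · refine ⟨0, hE, ?_, ?_⟩
      · have h1 : 2^e*b₀ + ρ < 2^e*b₀ + 2^e := by omega
        have h2 : 2^e*b₀ + 2^e = 2^e*(b₀+1) := by ring
        have h3 : 2^e*(b₀+1) ≤ 2^e*(b₀+u) := Nat.mul_le_mul_left _ (by omega)
        calc a = 2^e*b₀ + ρ := hrepr.symm
          _ ≤ 2^e*(b₀+1) := by omega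
          _ ≤ 2^e*(b₀+u) + 0 := by omega
      · have h3 : 2^e*(b₀+u) ≤ 2^e*(b₀+3) := Nat.mul_le_mul_left _ (by omega)
        have h4 : 2^e*(b₀+3) = 2^e*b₀ + 3*2^e := by ring
        have h5 : 2^e*b₀ ≤ a := by omega
        omega
  obtain ⟨o, ho, hx1, hx2⟩ := hcase
  obtain ⟨i, hi⟩ := Nat.le.dest hx1
  have him : i < m := by omega
  have hh := h i him
  have e2 : a + 2^e*C + i = 2^e*(b₀+C+u) + o := by
    calc a + 2^e*C + i = (a + i) + 2^e*C := by ring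
      _ = (2^e*(b₀+u) + o) + 2^e*C := by rw [hi]
      _ = 2^e*(b₀+C+u) + o := by ring
  have e1 : a + i = 2^e*(b₀+u) + o := hi
  rw [e1, e2, T_pow_add e _ _ ho, T_pow_add e _ _ ho] at hh
  unfold T
  omega

lemma tm_succ (x : ℕ) : tm (x+1) = T x := by
  unfold tm T sd
  simp

lemma tmBlock_eq_iff (j m r₁ r₂ : ℕ) :
    tmBlock j m r₁ = tmBlock j m r₂ ↔ ∀ i < m, T (j + r₁*m + i) = T (j + r₂*m + i) := by
  unfold tmBlock
  rw [List.map_eq_map_iff]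
  constructor
  · intro h i hi
    have := h i (List.mem_range.mpr hi)
    rwa [tm_succ, tm_succ] at this
  · intro h i hi
    rw [tm_succ, tm_succ]
    exact h i (List.mem_range.mp hi)

lemma bad_le (j k m : ℕ) (hodd : Odd m) (hbad : ¬ IsAntipowerJfix j k m) : m + 3 ≤ 3*k := by
  unfold IsAntipowerJfix at hbad
  push_neg at hbad
  obtain ⟨r₁, hr₁, r₂, hr₂, heq, hne⟩ := hbad
  suffices H : ∀ s₁ s₂, s₁ < s₂ → s₂ < k → tmBlock j m s₁ = tmBlock j m s₂ → m + 3 ≤ 3*k by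
    rcases lt_or_gt_of_ne hne with h | h
    · exact H r₁ r₂ h hr₂ heq
    · exact H r₂ r₁ h hr₁ heq.symm
  intro s₁ s₂ hlt hk heq2
  obtain ⟨d, hd, hdpos⟩ : ∃ d, s₂ = s₁ + d ∧ 0 < d := ⟨s₂ - s₁, by omega, by omega⟩
  obtain ⟨e, c, hc2, hdec⟩ := Nat.exists_eq_pow_mul_and_not_dvd (by omega : d ≠ 0) 2 (by norm_num)
  have hcodd : c % 2 = 1 := by omega
  have hmodd : m % 2 = 1 := by rcases hodd with ⟨t, ht⟩; omega
  have hcm : (c*m) % 2 = 1 := by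
    have := Nat.mul_mod c m 2
    rw [hcodd, hmodd] at this
    simpa using this
  have pointwise : ∀ i < m, T (j + s₁*m + i) = T (j + s₁*m + 2^e*(c*m) + i) := by
    intro i hi
    have h1 := (tmBlock_eq_iff j m s₁ s₂).mp heq2 i hi
    have e2 : j + s₂*m + i = j + s₁*m + 2^e*(c*m) + i := by rw [hd, hdec]; ring
    rw [e2] at h1
    exact h1
  by_contra hcon
  push_neg at hcon
  have h2e : 3*2^e < m := by
    have h1 : 2^e*1 ≤ 2^e * c := Nat.mul_le_mul_left _ (by omega)
    omega
  exact core_upper e (j + s₁*m) m (c*m) hcm h2e pointwise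

lemma GammaJ_le (j k : ℕ) : GammaJ j k ≤ 3*k := by
  unfold GammaJ
  rcases Set.eq_empty_or_nonempty {m : ℕ | Odd m ∧ ¬ IsAntipowerJfix j k m} with h | h
  · rw [h, csSup_empty]
    exact bot_le
  · exact csSup_le h (fun m hm => by have := bad_le j k m hm.1 hm.2; omega)

lemma le_GammaJ (j k m : ℕ) (h1 : Odd m) (h2 : ¬ IsAntipowerJfix j k m) : m ≤ GammaJ j k :=
  le_csSup ⟨3*k, fun m' hm' => by have := bad_le j k m' hm'.1 hm'.2; omega⟩ ⟨h1, h2⟩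

lemma sd_one : sd 1 = 1 := by
  have h := sd_two_mul_add_one 0
  norm_num [sd_zero] at h
  exact h

lemma sd_two : sd 2 = 1 := by
  have h := sd_two_mul 1
  norm_num [sd_one] at h
  exact h

lemma sd_three : sd 3 = 2 := by
  have h := sd_two_mul_add_one 1
  norm_num [sd_one] at h
  exact h

lemma sd_four : sd 4 = 1 := by
  have h := sd_two_mul 2
  norm_num [sd_two] at h
  exact h

lemma sd_five : sd 5 = 2 := by
  have h := sd_two_mul_add_one 2
  norm_num [sd_two] at h
  exact h

lemma sd_eight_mul_add (b o : ℕ) (ho : o < 8) : sd (8*b + o) = sd b + sd o := by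
  have h := sd_pow_mul_add 3 b o (by norm_num; omega)
  norm_num at h
  exact h

/-- among any three consecutive integers one has odd digit sum -/
lemma exists_odd_sd (n : ℕ) : ∃ δ, δ < 3 ∧ sd (n + δ) % 2 = 1 := by
  rcases Nat.even_or_odd n with ⟨x, hx⟩ | ⟨x, hx⟩
  · have e1 : sd n = sd x := by
      have h2 : n = 2*x := by omega
      rw [h2, sd_two_mul]
    have e2 : sd (n+1) = sd x + 1 := by
      have h2 : n+1 = 2*x+1 := by omega
      rw [h2, sd_two_mul_add_one]
    by_cases hp : sd x % 2 = 1
    · exact ⟨0, by omega, by rw [Nat.add_zero, e1]; exact hp⟩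
    · exact ⟨1, by omega, by rw [e2]; omega⟩
  · have e1 : sd (n+1) = sd (x+1) := by
      have h2 : n+1 = 2*(x+1) := by omega
      rw [h2, sd_two_mul]
    have e2 : sd (n+2) = sd (x+1) + 1 := by
      have h2 : n+2 = 2*(x+1)+1 := by omega
      rw [h2, sd_two_mul_add_one]
    by_cases hp : sd (x+1) % 2 = 1
    · exact ⟨1, by omega, by rw [e1]; exact hp⟩
    · exact ⟨2, by omega, by rw [e2]; omega⟩

/-- The main lower-bound construction. -/
lemma freq_lower (j q N : ℕ) (hq : 0 < q) :
    ∃ k ≥ N, ∃ m : ℕ, 0 < k ∧ Odd m ∧ ¬ IsAntipowerJfix j k m ∧ m ≤ 3*k ∧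
      q * (3*k) ≤ q*m + k := by
  -- parameters (opaque variables with defining equations)
  obtain ⟨v, hv⟩ : ∃ v, v = q + j + 1 := ⟨_, rfl⟩
  obtain ⟨R, hR⟩ : ∃ R, R = 8*v + 4 := ⟨_, rfl⟩
  obtain ⟨w, hw⟩ : ∃ w, w = 3*v + 1 := ⟨_, rfl⟩
  obtain ⟨L, hL⟩ : ∃ L, L = 2^(w+3) := ⟨_, rfl⟩
  obtain ⟨Big, hBig⟩ : ∃ B, B = (3*R+3)*(L*R) + R + 24*q*R + 24*q + j + 8 := ⟨_, rfl⟩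
  obtain ⟨E, hE⟩ : ∃ E, E = N + Big := ⟨_, rfl⟩
  obtain ⟨e, he⟩ : ∃ e, e = E + (w+3) := ⟨_, rfl⟩
  have hpow : 2^e = L * 2^E := by rw [he, hL, pow_add]; ring
  have hLpos : 0 < L := by rw [hL]; positivity
  have hEpow : E < 2^E := Nat.lt_two_pow_self
  have h2eE : 2^E ≤ 2^e := Nat.pow_le_pow_right (by norm_num) (by omega)
  have hbig2 : Big + N ≤ 2^e := by omega
  have hRA : R ≤ 2^e + j := by omega
  obtain ⟨A', hA'⟩ := Nat.le.dest hRA   -- R + A' = 2^e + j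
  have hLR : 0 < L*R := Nat.mul_pos hLpos (by omega)
  obtain ⟨H₀, hH₀⟩ : ∃ H, H = A' / (L*R) := ⟨_, rfl⟩
  obtain ⟨rem, hremdef⟩ : ∃ r, r = A' % (L*R) := ⟨_, rfl⟩
  have hdm : L*R*H₀ + rem = A' := by rw [hH₀, hremdef]; exact Nat.div_add_mod A' (L*R)
  have hremlt : rem < L*R := by rw [hremdef]; exact Nat.mod_lt _ hLR
  have hH₀big : 3*R + 3 ≤ H₀ := by
    rw [hH₀, Nat.le_div_iff_mul_le hLR]
    omega
  have hH₀small : H₀ < 3 * 2^E := by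
    have h2 : A' < 2 * 2^e := by omega
    have h3 : 2*(2^e) = L * (2*2^E) := by rw [hpow]; ring
    have h4 : L*R*H₀ = L * (R*H₀) := by ring
    have h5 : L * (R*H₀) < L * (2*2^E) := by omega
    have h6 : R*H₀ < 2*2^E := lt_of_mul_lt_mul_left h5 (Nat.zero_le L)
    have h7 : H₀*1 ≤ H₀*R := Nat.mul_le_mul_left _ (by omega)
    have h8 : H₀*R = R*H₀ := by ring
    omega
  -- choose δ via parity
  obtain ⟨B, hB⟩ := Nat.le.dest (le_of_lt hH₀small)   -- H₀ + B = 3*2^E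
  obtain ⟨δ, hδ3, hδodd⟩ := exists_odd_sd B
  obtain ⟨h₁, hh₁⟩ : ∃ h₁, h₁ + δ = H₀ := ⟨H₀ - δ, by omega⟩
  obtain ⟨Z, hZdef⟩ : ∃ Z, Z = B + δ := ⟨_, rfl⟩
  have hZ : Z + h₁ = 3 * 2^E := by omega
  have hsZ : sd Z % 2 = 1 := by rw [hZdef]; exact hδodd
  obtain ⟨h, hh⟩ : ∃ h, h = L*h₁ + 1 := ⟨_, rfl⟩
  -- expansions
  have p1 : L*R*H₀ = L*R*h₁ + L*R*δ := by rw [← hh₁]; ring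
  have p2 : (R+1)*h = L*R*h₁ + L*h₁ + R + 1 := by rw [hh]; ring
  have p3 : R*h = L*R*h₁ + R := by rw [hh]; ring
  have p4 : L*R*δ ≤ L*R*2 := Nat.mul_le_mul_left _ (by omega)
  have p6 : L*(3*R) ≤ L*h₁ := Nat.mul_le_mul_left _ (by omega)
  have p7 : L*(3*R) = 3*(L*R) := by ring
  have hRhA : R*h ≤ 2^e + j := by
    have t : L*R*h₁ ≤ L*R*H₀ := Nat.mul_le_mul_left _ (by omega)
    omega
  have hAR1h : 2^e + j ≤ (R+1)*h := by omega
  have hhlt : h < 2^e := by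
    have h2 : h*2 ≤ h*R := Nat.mul_le_mul_left _ (by omega)
    have h3 : h*R = R*h := by ring
    omega
  obtain ⟨m, hm⟩ : ∃ m, h + m = 3*2^e := Nat.le.dest (by omega)
  obtain ⟨ρ, hρ⟩ := Nat.le.dest hRhA    -- R*h + ρ = 2^e + j
  have hρh : ρ ≤ h := by omega
  have hρlt : ρ < 2^e := by
    have h2 : R*1 ≤ R*h := Nat.mul_le_mul_left _ (by omega)
    omega
  obtain ⟨a', ha'⟩ : ∃ a', a' = 8*w + 3 := ⟨_, rfl⟩
  obtain ⟨x', hx'def⟩ : ∃ x', x' = 2^w * Z + w := ⟨_, rfl⟩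
  have h8L : (8:ℕ) * 2^w = L := by rw [hL, pow_add]; ring
  have hx' : a' + m = 8*x' + 2 := by
    have r1 : 8*x' = 8*(2^w*Z) + 8*w := by rw [hx'def]; ring
    have r2 : 8*(2^w*Z) = L*Z := by rw [← h8L]; ring
    have r3 : L*Z + L*h₁ = L*(3*2^E) := by rw [← hZ]; ring
    have r4 : L*(3*2^E) = 3*2^e := by rw [hpow]; ring
    omega
  -- the three-letter condition
  have hsx' : sd x' = sd Z + sd w := by
    rw [hx'def]
    exact sd_pow_mul_add w Z w Nat.lt_two_pow_self
  have sa0 : sd (a' + 0) = sd w + 2 := by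
    have e1 : a' + 0 = 8*w + 3 := by omega
    rw [e1, sd_eight_mul_add w 3 (by norm_num), sd_three]
  have sa1 : sd (a' + 1) = sd w + 1 := by
    have e1 : a' + 1 = 8*w + 4 := by omega
    rw [e1, sd_eight_mul_add w 4 (by norm_num), sd_four]
  have sa2 : sd (a' + 2) = sd w + 2 := by
    have e1 : a' + 2 = 8*w + 5 := by omega
    rw [e1, sd_eight_mul_add w 5 (by norm_num), sd_five]
  have sb0 : sd (a' + m + 0) = sd x' + 1 := by
    have e1 : a' + m + 0 = 8*x' + 2 := by omega
    rw [e1, sd_eight_mul_add x' 2 (by norm_num), sd_two]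
  have sb1 : sd (a' + m + 1) = sd x' + 2 := by
    have e1 : a' + m + 1 = 8*x' + 3 := by omega
    rw [e1, sd_eight_mul_add x' 3 (by norm_num), sd_three]
  have sb2 : sd (a' + m + 2) = sd x' + 1 := by
    have e1 : a' + m + 2 = 8*x' + 4 := by omega
    rw [e1, sd_eight_mul_add x' 4 (by norm_num), sd_four]
  have h3 : ∀ u, u < 3 → T (a'+u) = T (a'+m+u) := by
    intro u hu
    interval_cases u
    · unfold T; rw [sa0, sb0, hsx']; omega
    · unfold T; rw [sa1, sb1, hsx']; omega
    · unfold T; rw [sa2, sb2, hsx']; omega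
  have hρm : ρ + m ≤ 3*2^e := by omega
  have hcore := core_lower e m a' ρ hρlt hρm h3
  -- key position identity : 2^e*a' + ρ = j + R*m
  have hRm : R*m + R*h = 3*(2^e*R) := by
    have u4 : R*m + R*h = R*(h+m) := by ring
    rw [u4, hm]; ring
  have hEa : 2^e*a' + 2^e = 3*(2^e*R) := by
    have u1 : 2^e*(a'+1) = 2^e*a' + 2^e := by ring
    have u1c : a' + 1 = 3*R := by omega
    rw [← u1, u1c]; ring
  have hkey : 2^e*a' + ρ = j + R*m := by omega
  -- block equality
  obtain ⟨k, hk⟩ : ∃ k, k = R + 2^e + 1 := ⟨_, rfl⟩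
  have hblocks : tmBlock j m R = tmBlock j m (R + 2^e) := by
    rw [tmBlock_eq_iff]
    intro i hi
    have hc := hcore i hi
    rw [hkey] at hc
    have e2 : j + R*m + 2^e*m = j + (R+2^e)*m := by ring
    rw [e2] at hc
    exact hc
  have h2epos : 0 < 2^e := by positivity
  have hnotap : ¬ IsAntipowerJfix j k m := by
    intro H
    have := H R (by omega) (R + 2^e) (by omega) hblocks
    omega
  -- m odd
  have hLev : L % 2 = 0 := by
    have : L = 2^(w+2)*2 := by rw [hL, pow_succ]
    omega
  have h2ev : 2^e % 2 = 0 := by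
    have e1 : e = (E+(w+2))+1 := by omega
    have : 2^e = 2^(E+(w+2))*2 := by rw [e1, pow_succ]
    omega
  have hmodd : m % 2 = 1 := by
    have t : L*h₁ % 2 = 0 := by
      rw [Nat.mul_mod, hLev]
      simp
    omega
  -- final inequalities
  have hqh : 8*(q*h) ≤ 2^e + j := by
    calc 8*(q*h) = (8*q)*h := by ring
      _ ≤ R*h := Nat.mul_le_mul_right _ (by omega)
      _ ≤ 2^e + j := hRhA
  have hm3k : m ≤ 3*k := by omega
  have hratio : q * (3*k) ≤ q*m + k := by
    have t0 : 3*k = 3*R + 3 + (m + h) := by omega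
    have t1 : q*(3*k) = q*m + q*(3*R+3+h) := by rw [t0]; ring
    have t2 : q*(3*R+3+h) ≤ k := by
      have s1 : 8*(q*(3*R+3+h)) = 24*q*R + 24*q + 8*(q*h) := by ring
      have s2 : 8*(q*(3*R+3+h)) ≤ 24*q*R + 24*q + 2^e + j := by omega
      omega
    omega
  exact ⟨k, by omega, m, by omega, Nat.odd_iff.mpr hmodd, hnotap, hm3k, hratio⟩

theorem Gamma_limsup_eq_three (j : ℕ) :
    Filter.limsup (fun k : ℕ => (GammaJ j k : ℝ) / k) Filter.atTop = 3 := by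
  have hFle : ∀ k : ℕ, (GammaJ j k : ℝ) / k ≤ 3 := by
    intro k
    rcases Nat.eq_zero_or_pos k with hk | hk
    · subst hk; norm_num
    · have hkR : (0:ℝ) < (k:ℝ) := by exact_mod_cast hk
      rw [div_le_iff₀ hkR]
      have h := GammaJ_le j k
      have : (GammaJ j k : ℝ) ≤ ((3*k : ℕ) : ℝ) := by exact_mod_cast h
      push_cast at this
      linarith
  have hbddabove : Filter.IsBoundedUnder (· ≤ ·) Filter.atTop
      (fun k : ℕ => (GammaJ j k : ℝ)/k) :=
    Filter.isBoundedUnder_of ⟨3, hFle⟩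
  have hbddbelow : Filter.IsBoundedUnder (· ≥ ·) Filter.atTop
      (fun k : ℕ => (GammaJ j k : ℝ)/k) :=
    Filter.isBoundedUnder_of ⟨0, fun k => by positivity⟩
  apply le_antisymm
  · exact Filter.limsup_le_of_le hbddbelow.isCoboundedUnder_le
      (Filter.Eventually.of_forall hFle)
  · have key : ∀ q : ℕ, 3 - 1/((q:ℝ)+1) ≤
        Filter.limsup (fun k : ℕ => (GammaJ j k : ℝ) / k) Filter.atTop := by
      intro q
      apply Filter.le_limsup_of_frequently_le _ hbddabove
      rw [Filter.frequently_atTop]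
      intro N
      obtain ⟨k, hkN, m, hkpos, hmodd, hnot, hm3k, hratio⟩ :=
        freq_lower j (q+1) N (by omega)
      refine ⟨k, hkN, ?_⟩
      have hG : m ≤ GammaJ j k := le_GammaJ j k m hmodd hnot
      have hkR : (0:ℝ) < (k:ℝ) := by exact_mod_cast hkpos
      have hqR : (0:ℝ) < (q:ℝ)+1 := by positivity
      rw [le_div_iff₀ hkR]
      rw [← mul_le_mul_iff_right₀ hqR]
      have h1 : ((q:ℝ)+1)*(3*(k:ℝ)) ≤ ((q:ℝ)+1)*(m:ℝ) + (k:ℝ) := by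
        have := hratio
        push_cast [Nat.mul_add, Nat.add_mul] at this ⊢
        push_cast
        exact_mod_cast hratio
      have h2 : (m:ℝ) ≤ (GammaJ j k : ℝ) := by exact_mod_cast hG
      have hexp : ((q:ℝ)+1)*((3 - 1/((q:ℝ)+1))*(k:ℝ)) = ((q:ℝ)+1)*(3*(k:ℝ)) - (k:ℝ) := by
        field_simp
      rw [hexp]
      have h3 : ((q:ℝ)+1)*(m:ℝ) ≤ ((q:ℝ)+1)*(GammaJ j k : ℝ) :=
        mul_le_mul_of_nonneg_left h2 (le_of_lt hqR)
      linarith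
    have htend : Filter.Tendsto (fun q : ℕ => 3 - 1/((q:ℝ)+1)) Filter.atTop (nhds 3) := by
      have h0 := tendsto_one_div_add_atTop_nhds_zero_nat (𝕜 := ℝ)
      have := Filter.Tendsto.const_sub (3:ℝ) h0
      simpa using this
    exact le_of_tendsto htend (Filter.Eventually.of_forall key)
end

section
/- Let j be a nonnegative integer, m a positive integer, and ℓ = ⌈log₂(m+j)⌉ (the least nonnegative integer with m + j ≤ 2^ℓ). If 𝔎_j(m) > 2^ℓ + 1, then t_{m+1} = t_{m+2} = 1, t_{2m+1} = 1, and t_{2m+2} = 0. -/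
/-! ### Auxiliary machinery -/

/-- The binary digit sum. -/
def tmS (n : ℕ) : ℕ := (Nat.digits 2 n).sum

lemma tm_succ_s10 (n : ℕ) : tm (n + 1) = tmS n % 2 := by simp [tm, tmS]

lemma tmS_two_mul_add (k r : ℕ) (hr : r < 2) : tmS (2 * k + r) = tmS k + r := by
  rcases Nat.eq_zero_or_pos (2 * k + r) with h | h
  · have hk : k = 0 := by omega
    have hr0 : r = 0 := by omega
    subst hk; subst hr0; simp [tmS]
  · unfold tmS
    rw [Nat.digits_def' (by norm_num : (1:ℕ) < 2) h,
      show (2 * k + r) % 2 = r by omega, show (2 * k + r) / 2 = k by omega,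
      List.sum_cons]
    omega

lemma tmS_two_mul (m : ℕ) : tmS (2 * m) = tmS m := by
  have := tmS_two_mul_add m 0 (by norm_num); simpa using this

lemma tmS_two_mul_add_one (m : ℕ) : tmS (2 * m + 1) = tmS m + 1 :=
  tmS_two_mul_add m 1 (by norm_num)

/-- Digit sums add across a power-of-two split. -/
lemma tmS_mul_pow_add (a : ℕ) : ∀ n, ∀ x < 2 ^ n, tmS (a * 2 ^ n + x) = tmS a + tmS x := by
  intro n
  induction n with
  | zero =>
    intro x hx
    have : x = 0 := by omega
    subst this; simp [tmS]
  | succ n ih =>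
    intro x hx
    have h2 : (2:ℕ) ^ (n + 1) = 2 * 2 ^ n := by rw [pow_succ]; ring
    have hx2 : x / 2 < 2 ^ n := by omega
    have harg : a * 2 ^ (n + 1) + x = 2 * (a * 2 ^ n + x / 2) + x % 2 := by
      have hx' : x = 2 * (x / 2) + x % 2 := by omega
      calc a * 2 ^ (n + 1) + x = a * (2 * 2 ^ n) + (2 * (x / 2) + x % 2) := by
            rw [← h2, ← hx']
        _ = 2 * (a * 2 ^ n + x / 2) + x % 2 := by ring
    rw [harg, tmS_two_mul_add _ _ (Nat.mod_lt _ (by norm_num)), ih (x / 2) hx2]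
    have hxs : tmS x = tmS (x / 2) + x % 2 := by
      conv_lhs => rw [show x = 2 * (x / 2) + x % 2 by omega]
      exact tmS_two_mul_add _ _ (Nat.mod_lt _ (by norm_num))
    omega

lemma tmBlock_eq_of_entries (j m r₁ r₂ : ℕ)
    (h : ∀ i < m, tm (j + r₁ * m + i + 1) = tm (j + r₂ * m + i + 1)) :
    tmBlock j m r₁ = tmBlock j m r₂ := by
  unfold tmBlock
  apply List.map_congr_left
  intro i hi
  rw [List.mem_range] at hi
  exact h i hi

/-- First collision: if the digit sum of `m` is even, blocks `0` and `E` coincide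
(where `E ≥ m + j` admits the splitting property). -/
lemma collision_of_even (j m E : ℕ) (hjE : m + j ≤ E)
    (hsd : ∀ a x, x < E → tmS (a * E + x) = tmS a + tmS x)
    (hSm : tmS m % 2 = 0) :
    tmBlock j m 0 = tmBlock j m E := by
  apply tmBlock_eq_of_entries
  intro i hi
  rw [tm_succ_s10, tm_succ_s10,
    show j + 0 * m + i = j + i by ring,
    show j + E * m + i = m * E + (j + i) by ring,
    hsd m (j + i) (by omega)]
  omega

/-- Second collision: if the digit sums of `m` and `m+1` have different parities,
blocks `E - j/m` and `(E - j/m) + E` coincide, where `2E ≥ m + j` admits splitting. -/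
lemma collision_of_ne (j m E : ℕ) (hm : 2 ≤ m) (hjE : j + m ≤ 2 * E)
    (hsd : ∀ a x, x < E → tmS (a * E + x) = tmS a + tmS x)
    (hS : tmS (m + 1) % 2 = (tmS m + 1) % 2) :
    ∃ r, r ≤ E ∧ tmBlock j m r = tmBlock j m (r + E) := by
  obtain ⟨q, jm, hj, hjm, hjmj⟩ : ∃ q jm, j = m * q + jm ∧ jm < m ∧ jm ≤ j :=
    ⟨j / m, j % m, (Nat.div_add_mod j m).symm, Nat.mod_lt _ (by omega), Nat.mod_le j m⟩
  have hjm2E : jm + m ≤ 2 * E := by omega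
  have hq : q ≤ E := by
    have h1 : 2 * q ≤ m * q := Nat.mul_le_mul_right q hm
    have h2 : m * q ≤ j := by omega
    omega
  obtain ⟨r, hr⟩ : ∃ r, q + r = E := ⟨E - q, by omega⟩
  refine ⟨r, by omega, ?_⟩
  apply tmBlock_eq_of_entries
  intro i hi
  rw [tm_succ_s10, tm_succ_s10, hj,
    show m * q + jm + r * m + i = m * E + (jm + i) by rw [← hr]; ring,
    show m * q + jm + (r + E) * m + i = 2 * m * E + (jm + i) by rw [← hr]; ring]
  have hy2E : jm + i < 2 * E := by omega
  rcases lt_or_ge (jm + i) E with hlt | hge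
  · rw [hsd m (jm + i) hlt, show 2 * m * E + (jm + i) = (2 * m) * E + (jm + i) by ring,
      hsd (2 * m) (jm + i) hlt, tmS_two_mul]
  · obtain ⟨z, hz⟩ : ∃ z, jm + i = E + z := ⟨jm + i - E, by omega⟩
    have hzE : z < E := by omega
    rw [hz, show m * E + (E + z) = (m + 1) * E + z by ring,
      show 2 * m * E + (E + z) = (2 * m + 1) * E + z by ring,
      hsd (m + 1) z hzE, hsd (2 * m + 1) z hzE, tmS_two_mul_add_one]
    omega

theorem tm_values_of_KJ_large (j m ℓ : ℕ) (hm : 0 < m)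
    (hℓ : IsLeast {l : ℕ | m + j ≤ 2 ^ l} ℓ)
    (hK : 2 ^ ℓ + 1 < KJ j m) :
    tm (m + 1) = 1 ∧ tm (m + 2) = 1 ∧ tm (2 * m + 1) = 1 ∧ tm (2 * m + 2) = 0 := by
  have hle : m + j ≤ 2 ^ ℓ := hℓ.1
  have hAP : IsAntipowerJfix j (2 ^ ℓ + 1) m := by
    by_contra h
    have hmem : (2 ^ ℓ + 1) ∈ {k : ℕ | 0 < k ∧ ¬ IsAntipowerJfix j k m} :=
      ⟨Nat.succ_pos _, h⟩
    have : KJ j m ≤ 2 ^ ℓ + 1 := Nat.sInf_le hmem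
    omega
  have hsdℓ : ∀ a x, x < 2 ^ ℓ → tmS (a * 2 ^ ℓ + x) = tmS a + tmS x :=
    fun a x hx => tmS_mul_pow_add a ℓ x hx
  -- Step 1 : tmS m is odd
  have hSm : tmS m % 2 = 1 := by
    by_contra h
    have hSm0 : tmS m % 2 = 0 := by omega
    have heq : tmBlock j m 0 = tmBlock j m (2 ^ ℓ) :=
      collision_of_even j m (2 ^ ℓ) hle hsdℓ hSm0
    have hpos : (0:ℕ) < 2 ^ ℓ := pow_pos (by norm_num) ℓ
    have := hAP 0 (by omega) (2 ^ ℓ) (by omega) heq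
    omega
  -- Step 2 : tmS (m+1) is odd
  have hSm1 : tmS (m + 1) % 2 = 1 := by
    by_contra h
    have hS0 : tmS (m + 1) % 2 = 0 := by omega
    rcases eq_or_lt_of_le (show 1 ≤ m from hm) with h1 | hm2
    · -- m = 1 : tmS 2 = 1, contradiction
      have hm1 : m = 1 := h1.symm
      subst hm1
      have e1 : tmS (1 + 1) = tmS 1 := by
        have := tmS_two_mul 1
        norm_num at this ⊢
        exact this
      have e2 : tmS 1 = 1 := by
        have := tmS_two_mul_add 0 1 (by norm_num)
        simpa [tmS] using this
      omega
    · have hm2' : 2 ≤ m := hm2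
      -- ℓ ≥ 1
      rcases ℓ with _ | l'
      · have : (2:ℕ) ^ 0 = 1 := pow_zero 2
        omega
      have h2p : (2:ℕ) ^ (l' + 1) = 2 * 2 ^ l' := by rw [pow_succ]; ring
      have hE : (0:ℕ) < 2 ^ l' := pow_pos (by norm_num) l'
      have hjE : j + m ≤ 2 * 2 ^ l' := by omega
      have hS : tmS (m + 1) % 2 = (tmS m + 1) % 2 := by omega
      obtain ⟨r, hr, heq⟩ := collision_of_ne j m (2 ^ l') hm2' hjE
        (fun a x hx => tmS_mul_pow_add a l' x hx) hS
      have := hAP r (by omega) (r + 2 ^ l') (by omega) heq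
      omega
  -- Conclusions
  have t1 : tm (m + 1) = tmS m % 2 := tm_succ_s10 m
  have t2 : tm (m + 2) = tmS (m + 1) % 2 := tm_succ_s10 (m + 1)
  have t3 : tm (2 * m + 1) = tmS (2 * m) % 2 := tm_succ_s10 (2 * m)
  have t4 : tm (2 * m + 2) = tmS (2 * m + 1) % 2 := tm_succ_s10 (2 * m + 1)
  rw [tmS_two_mul] at t3
  rw [tmS_two_mul_add_one] at t4
  refine ⟨by omega, by omega, by omega, by omega⟩
end
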